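/- For all natural numbers h ≤ k: if A is an operator form of L0 with lev(A) = h and the two-formula sequent B, C' has a cut-free derivation in M^Ω_k (where C is a formula of L0), then the sequent (¬A)(B), A'(C') also has a cut-free derivation in M^Ω_k. -/

import Mathlib

namespace OneVarMu

/-- Operator forms of the language `L_Ω` (one fixed variable `X`, written `var`).
`nut` is the auxiliary fixed-point connective `ν̃`; `L0` operator forms are the
`nut`-free ones. -/
inductive Form : Type
  | atom  : ℕ → Form          -- p_i
  | natom : ℕ → Form          -- p̄_i
  | var   : Form              -- X
  | and   : Form → Form → Form
  | or    : Form → Form → Form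
  | box   : Form → Form
  | dia   : Form → Form
  | mu    : Form → Form       -- μX.A
  | nu    : Form → Form       -- νX.A
  | nut   : Form → Form       -- ν̃X.A
  deriving DecidableEq

namespace Form

/-- Negation `¬A` (on `ν̃` we extend the `L0` definition as for `ν`). -/
def compl : Form → Form
  | atom i  => natom i
  | natom i => atom i
  | var     => var
  | and A B => or (compl A) (compl B)
  | or A B  => and (compl A) (compl B)
  | box A   => dia (compl A)
  | dia A   => box (compl A)
  | mu A    => nu (compl A)
  | nu A    => mu (compl A)
  | nut A   => mu (compl A)

/-- `subst A B` is `A(B)`: substitute `B` for every free occurrence of `X` in `A`. -/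
def subst : Form → Form → Form
  | atom i, _  => atom i
  | natom i, _ => natom i
  | var, B     => B
  | and A1 A2, B => and (subst A1 B) (subst A2 B)
  | or A1 A2, B  => or (subst A1 B) (subst A2 B)
  | box A, B   => box (subst A B)
  | dia A, B   => dia (subst A B)
  | mu A, _    => mu A
  | nu A, _    => nu A
  | nut A, _   => nut A

/-- The level of an operator form: maximal nesting of fixed-point operators. -/
def lev : Form → ℕ
  | atom _  => 0
  | natom _ => 0
  | var     => 0
  | and A B => max (lev A) (lev B)
  | or A B  => max (lev A) (lev B)
  | box A   => lev A
  | dia A   => lev A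
  | mu A    => lev A + 1
  | nu A    => lev A + 1
  | nut A   => lev A + 1

/-- `A'`: replace every occurrence of `νX` by `ν̃X`. -/
def prime : Form → Form
  | atom i  => atom i
  | natom i => natom i
  | var     => var
  | and A B => and (prime A) (prime B)
  | or A B  => or (prime A) (prime B)
  | box A   => box (prime A)
  | dia A   => dia (prime A)
  | mu A    => mu (prime A)
  | nu A    => nut (prime A)
  | nut A   => nut (prime A)

/-- `A` is an operator form of `L0`, i.e. contains no `ν̃`. -/
def IsL0 : Form → Prop
  | and A B => IsL0 A ∧ IsL0 B
  | or A B  => IsL0 A ∧ IsL0 B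
  | box A   => IsL0 A
  | dia A   => IsL0 A
  | mu A    => IsL0 A
  | nu A    => IsL0 A
  | nut _   => False
  | _       => True

/-- `A` has no free occurrence of the variable `X`, i.e. `A` is a formula. -/
def ClosedF : Form → Prop
  | var     => False
  | and A B => ClosedF A ∧ ClosedF B
  | or A B  => ClosedF A ∧ ClosedF B
  | box A   => ClosedF A
  | dia A   => ClosedF A
  | _       => True

/-- `⊤ := p ∨ p̄` for a fixed atomic proposition. -/
def top : Form := or (atom 0) (natom 0)

/-- Finite iterations `A^i(⊤)`. -/
def iter (A : Form) : ℕ → Form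
  | 0     => top
  | n + 1 => subst A (iter A n)

/-- `OccursIn A B`: the operator form `A` occurs (as a subterm) in `B`. -/
def OccursIn (A : Form) : Form → Prop
  | atom i  => A = atom i
  | natom i => A = natom i
  | var     => A = var
  | and C D => A = and C D ∨ OccursIn A C ∨ OccursIn A D
  | or C D  => A = or C D ∨ OccursIn A C ∨ OccursIn A D
  | box C   => A = box C ∨ OccursIn A C
  | dia C   => A = dia C ∨ OccursIn A C
  | mu C    => A = mu C ∨ OccursIn A C
  | nu C    => A = nu C ∨ OccursIn A C
  | nut C   => A = nut C ∨ OccursIn A C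

/-- `replace t r A`: simultaneously replace every occurrence of `t` in `A` by `r`. -/
def replace (t r : Form) : Form → Form
  | and A B => if and A B = t then r else and (replace t r A) (replace t r B)
  | or A B  => if or A B = t then r else or (replace t r A) (replace t r B)
  | box A   => if box A = t then r else box (replace t r A)
  | dia A   => if dia A = t then r else dia (replace t r A)
  | mu A    => if mu A = t then r else mu (replace t r A)
  | nu A    => if nu A = t then r else nu (replace t r A)
  | nut A   => if nut A = t then r else nut (replace t r A)
  | A       => if A = t then r else A

end Form

/-- Sequents are finite sets of formulae. -/
abbrev Sequent := Finset Form

/-- Every member is a formula (no free `X`): a sequent of `L_Ω`. -/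
def ClosedSeq (Γ : Sequent) : Prop := ∀ C ∈ Γ, C.ClosedF

/-- A sequent of `L0`: every member is a `ν̃`-free formula. -/
def L0Seq (Γ : Sequent) : Prop := ∀ C ∈ Γ, C.IsL0 ∧ C.ClosedF

/-- `Γ` is `h`-positive: every `ν̃X.A` occurring in it has level `< h`. -/
def Positive (h : ℕ) (Γ : Sequent) : Prop :=
  ∀ C ∈ Γ, ∀ B : Form, Form.OccursIn (Form.nut B) C → Form.lev (Form.nut B) < h

/-- Every formula of the sequent has level `≤ k`. -/
def SeqLevLE (k : ℕ) (Γ : Sequent) : Prop := ∀ C ∈ Γ, C.lev ≤ k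

/-- The infinitary cut-free system `K_ω`. -/
inductive KDer : Sequent → Prop
  | ax (Γ : Sequent) (i : ℕ) :
      KDer (insert (Form.atom i) (insert (Form.natom i) Γ))
  | orR (Γ : Sequent) (A B : Form) :
      KDer (insert A (insert B Γ)) → KDer (insert (Form.or A B) Γ)
  | andR (Γ : Sequent) (A B : Form) :
      KDer (insert A Γ) → KDer (insert B Γ) → KDer (insert (Form.and A B) Γ)
  | boxR (Γ S : Sequent) (A : Form) :
      KDer (insert A Γ) → KDer (Γ.image Form.dia ∪ insert (Form.box A) S)
  | clo (Γ : Sequent) (A : Form) :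
      KDer (insert (Form.subst A (Form.mu A)) Γ) → KDer (insert (Form.mu A) Γ)
  | nuR (Γ : Sequent) (A : Form) :
      (∀ i : ℕ, KDer (insert (Form.iter A i) Γ)) → KDer (insert (Form.nu A) Γ)

/-- The finitary system `M` (with induction rule and cut). -/
inductive MDer : Sequent → Prop
  | ax (Γ : Sequent) (i : ℕ) :
      MDer (insert (Form.atom i) (insert (Form.natom i) Γ))
  | axMu (Γ : Sequent) (A : Form) :
      MDer (insert (Form.mu A) (insert (Form.compl (Form.mu A)) Γ))
  | orR (Γ : Sequent) (A B : Form) :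
      MDer (insert A (insert B Γ)) → MDer (insert (Form.or A B) Γ)
  | andR (Γ : Sequent) (A B : Form) :
      MDer (insert A Γ) → MDer (insert B Γ) → MDer (insert (Form.and A B) Γ)
  | boxR (Γ S : Sequent) (A : Form) :
      MDer (insert A Γ) → MDer (Γ.image Form.dia ∪ insert (Form.box A) S)
  | clo (Γ : Sequent) (A : Form) :
      MDer (insert (Form.subst A (Form.mu A)) Γ) → MDer (insert (Form.mu A) Γ)
  | ind (A B : Form) :
      MDer (insert (Form.compl (Form.subst A B)) {B}) →
      MDer (insert (Form.compl (Form.mu A)) {B})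
  | cut (Γ : Sequent) (A : Form) :
      A.IsL0 → A.ClosedF →
      MDer (insert A Γ) → MDer (insert (Form.compl A) Γ) → MDer Γ

/-- The finitary system `M`, with the extra recording that every sequent occurring
in the proof (i.e. the conclusion of every subderivation) has level `≤ k`. -/
inductive MDerB (k : ℕ) : Sequent → Prop
  | ax (Γ : Sequent) (i : ℕ) :
      SeqLevLE k (insert (Form.atom i) (insert (Form.natom i) Γ)) →
      MDerB k (insert (Form.atom i) (insert (Form.natom i) Γ))
  | axMu (Γ : Sequent) (A : Form) :
      SeqLevLE k (insert (Form.mu A) (insert (Form.compl (Form.mu A)) Γ)) →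
      MDerB k (insert (Form.mu A) (insert (Form.compl (Form.mu A)) Γ))
  | orR (Γ : Sequent) (A B : Form) :
      SeqLevLE k (insert (Form.or A B) Γ) →
      MDerB k (insert A (insert B Γ)) → MDerB k (insert (Form.or A B) Γ)
  | andR (Γ : Sequent) (A B : Form) :
      SeqLevLE k (insert (Form.and A B) Γ) →
      MDerB k (insert A Γ) → MDerB k (insert B Γ) → MDerB k (insert (Form.and A B) Γ)
  | boxR (Γ S : Sequent) (A : Form) :
      SeqLevLE k (Γ.image Form.dia ∪ insert (Form.box A) S) →
      MDerB k (insert A Γ) → MDerB k (Γ.image Form.dia ∪ insert (Form.box A) S)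
  | clo (Γ : Sequent) (A : Form) :
      SeqLevLE k (insert (Form.mu A) Γ) →
      MDerB k (insert (Form.subst A (Form.mu A)) Γ) → MDerB k (insert (Form.mu A) Γ)
  | ind (A B : Form) :
      SeqLevLE k (insert (Form.compl (Form.mu A)) {B}) →
      MDerB k (insert (Form.compl (Form.subst A B)) {B}) →
      MDerB k (insert (Form.compl (Form.mu A)) {B})
  | cut (Γ : Sequent) (A : Form) :
      A.IsL0 → A.ClosedF → SeqLevLE k Γ →
      MDerB k (insert A Γ) → MDerB k (insert (Form.compl A) Γ) → MDerB k Γ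

/-- Derivations of the system `M^Ω_k`, relative to a predicate `prev` expressing
cut-free derivability in `M^Ω_{k-1}`.  The boolean index is `true` if instances
of cut are allowed and `false` for cut-free derivations. -/
inductive OmDerAux (prev : Sequent → Prop) (k : ℕ) : Bool → Sequent → Prop
  | ax (c : Bool) (Γ : Sequent) (i : ℕ) :
      OmDerAux prev k c (insert (Form.atom i) (insert (Form.natom i) Γ))
  | orR (c : Bool) (Γ : Sequent) (A B : Form) :
      OmDerAux prev k c (insert A (insert B Γ)) →
      OmDerAux prev k c (insert (Form.or A B) Γ)
  | andR (c : Bool) (Γ : Sequent) (A B : Form) :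
      OmDerAux prev k c (insert A Γ) → OmDerAux prev k c (insert B Γ) →
      OmDerAux prev k c (insert (Form.and A B) Γ)
  | boxR (c : Bool) (Γ S : Sequent) (A : Form) :
      OmDerAux prev k c (insert A Γ) →
      OmDerAux prev k c (Γ.image Form.dia ∪ insert (Form.box A) S)
  | clo (c : Bool) (Γ : Sequent) (A : Form) :
      OmDerAux prev k c (insert (Form.subst A (Form.mu A)) Γ) →
      OmDerAux prev k c (insert (Form.mu A) Γ)
  | nuR (c : Bool) (Γ : Sequent) (A : Form) :
      (∀ i : ℕ, OmDerAux prev k c (insert (Form.iter A i) Γ)) →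
      OmDerAux prev k c (insert (Form.nu A) Γ)
  | cut (Γ : Sequent) (A : Form) :
      A.IsL0 → A.ClosedF → A.lev ≤ k →
      OmDerAux prev k true (insert (Form.prime A) Γ) →
      OmDerAux prev k true (insert (Form.prime (Form.compl A)) Γ) →
      OmDerAux prev k true Γ
  | omega (c : Bool) (Γ : Sequent) (A : Form) (h : ℕ) :
      1 ≤ h → h ≤ k → A.IsL0 →
      Form.lev (Form.prime (Form.compl (Form.mu A))) = h →
      (∀ Δ : Sequent, ClosedSeq Δ → Positive h Δ →
        prev (insert (Form.prime (Form.mu A)) Δ) → OmDerAux prev k c (Δ ∪ Γ)) →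
      OmDerAux prev k c (insert (Form.prime (Form.compl (Form.mu A))) Γ)
  | omegaT (c : Bool) (Γ : Sequent) (A : Form) (h : ℕ) :
      1 ≤ h → h ≤ k → A.IsL0 →
      Form.lev (Form.prime (Form.compl (Form.mu A))) = h →
      OmDerAux prev k c (insert (Form.prime (Form.mu A)) Γ) →
      (∀ Δ : Sequent, ClosedSeq Δ → Positive h Δ →
        prev (insert (Form.prime (Form.mu A)) Δ) → OmDerAux prev k c (Δ ∪ Γ)) →
      OmDerAux prev k c Γ

/-- `OmProv k c Γ`: the sequent `Γ` is derivable in `M^Ω_k`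
(cut-free when `c = false`). -/
def OmProv : ℕ → Bool → Sequent → Prop
  | 0     => OmDerAux (fun _ => False) 0
  | k + 1 => OmDerAux (fun Δ => OmProv k false Δ) (k + 1)

/-!
By induction on `A`, a cut-free derivation of `B, D` in `M^Ω_k` yields one of `(¬A)'(B), A'(D)`.
The fixed-point cases are the identity `(¬μX.A)', (μX.A)'`, an instance of `Ω_h` whose proviso
holds because cut-free derivability in `M^Ω_k` grows with `k`. That monotonicity rests on
collapsing: a cut-free `M^Ω_m` derivation of a closed `(j+1)`-positive sequent is already one in
`M^Ω_j`, because an `Ω̃_h` with `h > j` can be discharged by its own proviso taken at `Δ := Γ`.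

It remains to remove the primes from `(¬A)'(B)`. In a cut-free derivation a formula `E'` with
`E ∈ L0` can be replaced by `E`: every rule survives this except `Ω_h` with main formula
`(νX.E)'`, which becomes the `ω`-rule for `νX.E`; its premises `E^i(⊤)` come from the proviso
applied to the derivable sequents `(μX.¬E)', (E^i(⊤))'`.
-/

open Finset

namespace Form

theorem lev_prime (A : Form) : A.prime.lev = A.lev := by
  induction A <;> simp [prime, lev, *]

theorem lev_compl (A : Form) : A.compl.lev = A.lev := by
  induction A <;> simp [compl, lev, *]

theorem IsL0.compl {A : Form} (hA : A.IsL0) : A.compl.IsL0 := by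
  induction A <;> simp_all [Form.compl, IsL0]

theorem compl_compl {A : Form} (hA : A.IsL0) : A.compl.compl = A := by
  induction A <;> simp_all [compl, IsL0]

theorem prime_subst (A B : Form) : (A.subst B).prime = A.prime.subst B.prime := by
  induction A <;> simp [prime, subst, *]

theorem IsL0.subst {A B : Form} (hA : A.IsL0) (hB : B.IsL0) : (A.subst B).IsL0 := by
  induction A <;> simp_all [Form.subst, IsL0]

theorem ClosedF.subst (A : Form) {B : Form} (hB : B.ClosedF) : (A.subst B).ClosedF := by
  induction A <;> simp_all [Form.subst, ClosedF]

theorem ClosedF.prime {A : Form} (hA : A.ClosedF) : A.prime.ClosedF := by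
  induction A <;> simp_all [Form.prime, ClosedF]

theorem lev_subst_le (A B : Form) : (A.subst B).lev ≤ max A.lev B.lev := by
  induction A <;> simp [subst, lev, *] <;> omega

theorem lev_iter_le (A : Form) (i : ℕ) : (A.iter i).lev ≤ A.lev := by
  induction i with
  | zero => simp [iter, top, lev]
  | succ i ih => exact (lev_subst_le _ _).trans (by simp [ih])

theorem IsL0.iter {A : Form} (hA : A.IsL0) (i : ℕ) : (A.iter i).IsL0 := by
  induction i with
  | zero => simp [Form.iter, top, IsL0]
  | succ i ih => exact hA.subst ih

theorem closedF_iter (A : Form) (i : ℕ) : (A.iter i).ClosedF := by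
  induction i with
  | zero => simp [iter, top, ClosedF]
  | succ i ih => exact ClosedF.subst A ih

theorem prime_injOn : Set.InjOn prime {A | A.IsL0} := by
  rintro A (hA : A.IsL0) B (hB : B.IsL0) h
  induction A generalizing B <;> cases B <;> simp only [prime, IsL0, reduceCtorEq] at * <;>
    grind

theorem lev_prime_compl_mu (A : Form) : (compl (mu A)).prime.lev = A.lev + 1 := by
  simp [compl, prime, lev, lev_prime, lev_compl]

def IsPositive (h : ℕ) (C : Form) : Prop := ∀ B : Form, OccursIn (nut B) C → (nut B).lev < h

theorem lev_le_of_occursIn {G C : Form} (h : OccursIn G C) : G.lev ≤ C.lev := by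
  induction C <;> simp only [OccursIn] at h <;> grind [lev]

variable {h : ℕ} {A B : Form}

theorem IsPositive.of_lev_lt (hC : A.lev < h) : A.IsPositive h :=
  fun _ hB => (lev_le_of_occursIn hB).trans_lt hC

theorem IsPositive.mono {h' : ℕ} (hA : A.IsPositive h) (hh : h ≤ h') : A.IsPositive h' :=
  fun B hB => (hA B hB).trans_le hh

@[simp] theorem isPositive_and : (and A B).IsPositive h ↔ A.IsPositive h ∧ B.IsPositive h := by
  simp [IsPositive, OccursIn, or_imp, forall_and]

@[simp] theorem isPositive_or : (or A B).IsPositive h ↔ A.IsPositive h ∧ B.IsPositive h := by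
  simp [IsPositive, OccursIn, or_imp, forall_and]

@[simp] theorem isPositive_box : (box A).IsPositive h ↔ A.IsPositive h := by
  simp [IsPositive, OccursIn]

@[simp] theorem isPositive_dia : (dia A).IsPositive h ↔ A.IsPositive h := by
  simp [IsPositive, OccursIn]

@[simp] theorem isPositive_mu : (mu A).IsPositive h ↔ A.IsPositive h := by
  simp [IsPositive, OccursIn]

@[simp] theorem isPositive_nu : (nu A).IsPositive h ↔ A.IsPositive h := by
  simp [IsPositive, OccursIn]

theorem IsPositive.subst (hA : A.IsPositive h) (hB : B.IsPositive h) :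
    (A.subst B).IsPositive h := by
  induction A <;> simp_all [Form.subst]

theorem IsPositive.lev_lt (hA : (nut A).IsPositive h) : (nut A).lev < h :=
  hA A (Or.inl rfl)

theorem IsPositive.mu_prime (hA : A.lev < h) : (mu A).prime.IsPositive h :=
  isPositive_mu.mpr (.of_lev_lt (by rwa [lev_prime]))

theorem IsPositive.iter (hA : A.IsPositive h) (i : ℕ) : (A.iter i).IsPositive h := by
  induction i with
  | zero => simp [Form.iter, top, IsPositive, OccursIn]
  | succ i ih => exact hA.subst ih

end Form

section SequentPredicates

variable {h : ℕ} {F : Form} {Γ Δ : Sequent}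

theorem closedSeq_insert : ClosedSeq (insert F Γ) ↔ F.ClosedF ∧ ClosedSeq Γ :=
  forall_mem_insert _ _ _

theorem closedSeq_union : ClosedSeq (Γ ∪ Δ) ↔ ClosedSeq Γ ∧ ClosedSeq Δ :=
  forall_mem_union

theorem positive_insert : Positive h (insert F Γ) ↔ F.IsPositive h ∧ Positive h Γ :=
  forall_mem_insert _ _ _

theorem positive_union : Positive h (Γ ∪ Δ) ↔ Positive h Γ ∧ Positive h Δ :=
  forall_mem_union

theorem positive_singleton : Positive h {F} ↔ F.IsPositive h := by
  simp [Positive, Form.IsPositive]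

theorem Positive.mono {h' : ℕ} (hΓ : Positive h Γ) (hh : h ≤ h') : Positive h' Γ :=
  fun C hC => Form.IsPositive.mono (hΓ C hC) hh

end SequentPredicates

namespace OmDerAux

variable {P : Sequent → Prop} {k : ℕ} {c : Bool}

theorem weaken {Θ Θ' : Sequent} (d : OmDerAux P k c Θ) (hs : Θ ⊆ Θ') :
    OmDerAux P k c Θ' := by
  induction d generalizing Θ' with
  | ax c Γ i =>
    obtain ⟨h₁, h₂, -⟩ := by simpa only [insert_subset_iff] using hs
    rw [← insert_eq_of_mem h₁, ← insert_eq_of_mem h₂]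
    exact ax c Θ' i
  | orR c Γ A B _ ih =>
    obtain ⟨h, hΓ⟩ := insert_subset_iff.mp hs
    rw [← insert_eq_of_mem h]
    exact orR c Θ' A B (ih (insert_subset_insert _ (insert_subset_insert _ hΓ)))
  | andR c Γ A B _ _ ih₁ ih₂ =>
    obtain ⟨h, hΓ⟩ := insert_subset_iff.mp hs
    rw [← insert_eq_of_mem h]
    exact andR c Θ' A B (ih₁ (insert_subset_insert _ hΓ)) (ih₂ (insert_subset_insert _ hΓ))
  | boxR c Γ S A d _ =>
    obtain ⟨hΓ, h, -⟩ := by simpa only [union_subset_iff, insert_subset_iff] using hs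
    have hΘ' : Γ.image Form.dia ∪ insert (Form.box A) Θ' = Θ' := by
      rw [insert_eq_of_mem h, union_eq_right.mpr hΓ]
    exact hΘ' ▸ boxR c Γ Θ' A d
  | clo c Γ A _ ih =>
    obtain ⟨h, hΓ⟩ := insert_subset_iff.mp hs
    rw [← insert_eq_of_mem h]
    exact clo c Θ' A (ih (insert_subset_insert _ hΓ))
  | nuR c Γ A _ ih =>
    obtain ⟨h, hΓ⟩ := insert_subset_iff.mp hs
    rw [← insert_eq_of_mem h]
    exact nuR c Θ' A fun i => ih i (insert_subset_insert _ hΓ)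
  | cut Γ A hA hc hl _ _ ih₁ ih₂ =>
    exact cut Θ' A hA hc hl (ih₁ (insert_subset_insert _ hs)) (ih₂ (insert_subset_insert _ hs))
  | omega c Γ A h h₁ hk hA hl _ ih =>
    obtain ⟨hN, hΓ⟩ := insert_subset_iff.mp hs
    rw [← insert_eq_of_mem hN]
    exact omega c Θ' A h h₁ hk hA hl
      fun Δ hΔ hp hd => ih Δ hΔ hp hd (union_subset_union_right hΓ)
  | omegaT c Γ A h h₁ hk hA hl _ _ ih₁ ih =>
    exact omegaT c Θ' A h h₁ hk hA hl (ih₁ (insert_subset_insert _ hs))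
      fun Δ hΔ hp hd => ih Δ hΔ hp hd (union_subset_union_right hs)

theorem of_atom_mem {Γ : Sequent} {i : ℕ} (h₁ : Form.atom i ∈ Γ)
    (h₂ : Form.natom i ∈ Γ) : OmDerAux P k c Γ :=
  (ax c ∅ i).weaken (by simp [insert_subset_iff, h₁, h₂])

theorem of_top_mem {Γ : Sequent} (h : Form.top ∈ Γ) : OmDerAux P k c Γ := by
  rw [← insert_eq_of_mem h]
  exact orR c Γ _ _ (of_atom_mem (mem_insert_self _ _) (mem_insert_of_mem (mem_insert_self _ _)))

theorem or_and {L₁ L₂ R₁ R₂ : Form} (d₁ : OmDerAux P k c {L₁, R₁})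
    (d₂ : OmDerAux P k c {L₂, R₂}) :
    OmDerAux P k c {Form.or L₁ L₂, Form.and R₁ R₂} := by
  have e₁ := orR c {R₁} L₁ L₂ (d₁.weaken (by grind))
  have e₂ := orR c {R₂} L₁ L₂ (d₂.weaken (by grind))
  have f := andR c {Form.or L₁ L₂} R₁ R₂ (e₁.weaken (by grind)) (e₂.weaken (by grind))
  exact f.weaken (by grind)

theorem dia_box {L R : Form} (d : OmDerAux P k c {L, R}) :
    OmDerAux P k c {Form.dia L, Form.box R} :=
  (boxR c {L} ∅ R (d.weaken (by grind))).weaken (by grind)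

end OmDerAux

def prevOf : ℕ → Sequent → Prop
  | 0 => fun _ => False
  | k + 1 => OmProv k false

theorem omProv_eq (m : ℕ) : OmProv m = OmDerAux (prevOf m) m := by
  cases m <;> rfl

def MonoBelow (m : ℕ) : Prop := ∀ j < m, ∀ Θ, OmProv j false Θ → OmProv (j + 1) false Θ

theorem MonoBelow.omProv_mono {m a b : ℕ} (hmono : MonoBelow m) (hab : a ≤ b) (hb : b ≤ m)
    {Θ : Sequent} (d : OmProv a false Θ) : OmProv b false Θ := by
  induction b, hab using Nat.le_induction with
  | base => exact d
  | succ b _ ih => exact hmono b (by omega) Θ (ih (by omega))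

theorem MonoBelow.prevOf_mono {m j : ℕ} (hmono : MonoBelow m) (hj : j ≤ m) {Δ : Sequent}
    (hd : prevOf j Δ) : prevOf m Δ := by
  obtain _ | j := j
  · exact hd.elim
  obtain _ | m := m
  · omega
  exact hmono.omProv_mono (by omega) (by omega) hd

theorem MonoBelow.collapse {m : ℕ} (hmono : MonoBelow m) {Θ : Sequent} (d : OmProv m false Θ)
    {j : ℕ} (hj : j < m) (hcl : ClosedSeq Θ) (hpos : Positive (j + 1) Θ) :
    OmProv j false Θ := by
  rw [omProv_eq] at d ⊢
  generalize hc : false = c at d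
  induction d generalizing j with
  | ax => exact .ax _ _ _
  | orR c Γ A B _ ih =>
    simp only [closedSeq_insert, positive_insert, Form.ClosedF, Form.isPositive_or,
      and_assoc] at *
    exact .orR _ _ _ _ (ih hj hcl hpos hc)
  | andR c Γ A B _ _ ih₁ ih₂ =>
    simp only [closedSeq_insert, positive_insert, Form.ClosedF, Form.isPositive_and,
      and_assoc] at *
    exact .andR _ _ _ _ (ih₁ hj ⟨hcl.1, hcl.2.2⟩ ⟨hpos.1, hpos.2.2⟩ hc)
      (ih₂ hj hcl.2 hpos.2 hc)
  | boxR c Γ S A _ ih =>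
    simp only [ClosedSeq, Positive, forall_mem_union, forall_mem_image, forall_mem_insert,
      Form.ClosedF] at hcl hpos
    simp only [closedSeq_insert, positive_insert] at ih
    exact .boxR _ _ _ _ (ih hj ⟨hcl.2.1, hcl.1⟩ ⟨Form.isPositive_box.mp hpos.2.1,
      fun C hC => Form.isPositive_dia.mp (hpos.1 hC)⟩ hc)
  | clo c Γ A _ ih =>
    simp only [closedSeq_insert, positive_insert, Form.isPositive_mu] at *
    exact .clo _ _ _ (ih hj ⟨.subst A trivial, hcl.2⟩
      ⟨hpos.1.subst (Form.isPositive_mu.mpr hpos.1), hpos.2⟩ hc)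
  | nuR c Γ A _ ih =>
    simp only [closedSeq_insert, positive_insert, Form.isPositive_nu] at *
    exact .nuR _ _ _ fun i =>
      ih i hj ⟨Form.closedF_iter A i, hcl.2⟩ ⟨hpos.1.iter i, hpos.2⟩ hc
  | cut => cases hc
  | omega c Γ A h' h₁ hk hA hl _ ih =>
    rw [closedSeq_insert] at hcl
    rw [positive_insert] at hpos
    have hh' : h' ≤ j := by
      have : (Form.compl (Form.mu A)).prime.lev < j + 1 := hpos.1.lev_lt
      omega
    exact .omega _ Γ A h' h₁ hh' hA hl fun Δ hΔ hpΔ hd =>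
      ih Δ hΔ hpΔ (hmono.prevOf_mono (by omega) hd) hj (closedSeq_union.mpr ⟨hΔ, hcl.2⟩)
        (positive_union.mpr ⟨hpΔ.mono (by omega), hpos.2⟩) hc
  | omegaT c Γ A h' h₁ hk hA hl _ _ ih₁ ih =>
    subst hc
    have hlA : A.lev + 1 = h' := by rw [← hl, Form.lev_prime_compl_mu]
    have hclμ : ClosedSeq (insert (Form.mu A).prime Γ) := closedSeq_insert.mpr ⟨trivial, hcl⟩
    by_cases hh' : h' ≤ j
    · refine .omegaT _ Γ A h' h₁ hh' hA hl
        (ih₁ hj hclμ (positive_insert.mpr ⟨.mu_prime (by omega), hpos⟩) rfl) ?_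
      exact fun Δ hΔ hpΔ hd => ih Δ hΔ hpΔ (hmono.prevOf_mono (by omega) hd) hj
        (closedSeq_union.mpr ⟨hΔ, hcl⟩)
        (positive_union.mpr ⟨hpΔ.mono (by omega), hpos⟩) rfl
    -- `h' > j`: the rule is discharged by its own proviso, taken at `Δ := Γ`.
    obtain ⟨h'', rfl⟩ : ∃ h'', h' = h'' + 1 := ⟨h' - 1, by omega⟩
    have hμ : prevOf (h'' + 1) (insert (Form.mu A).prime Γ) := by
      rw [prevOf, omProv_eq]
      exact ih₁ (by omega) hclμ
        (positive_insert.mpr ⟨.mu_prime (by omega), hpos.mono (by omega)⟩) rfl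
    have := ih Γ hcl (hpos.mono (by omega)) (hmono.prevOf_mono hk hμ) hj
      (by rwa [union_self]) (by rwa [union_self]) rfl
    rwa [union_self] at this

theorem MonoBelow.prevOf_of_succ {m : ℕ} (hmono : MonoBelow m) {A : Form} {h : ℕ}
    {Δ : Sequent} (h₁ : 1 ≤ h) (hk : h ≤ m) (hl : (Form.compl (Form.mu A)).prime.lev = h)
    (hΔ : ClosedSeq Δ) (hpΔ : Positive h Δ)
    (hd : prevOf (m + 1) (insert (Form.mu A).prime Δ)) :
    prevOf m (insert (Form.mu A).prime Δ) := by
  obtain ⟨h, rfl⟩ : ∃ h', h = h' + 1 := ⟨h - 1, by omega⟩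
  have hlA : A.lev = h := by rw [Form.lev_prime_compl_mu] at hl; omega
  exact hmono.prevOf_mono hk <| hmono.collapse hd (by omega)
    (closedSeq_insert.mpr ⟨trivial, hΔ⟩) (positive_insert.mpr ⟨.mu_prime (by omega), hpΔ⟩)

theorem MonoBelow.mono_succ {m : ℕ} (hmono : MonoBelow m) {c : Bool} {Θ : Sequent}
    (d : OmProv m c Θ) : OmProv (m + 1) c Θ := by
  rw [omProv_eq] at d ⊢
  induction d with
  | ax => exact .ax _ _ _
  | orR _ _ _ _ _ ih => exact .orR _ _ _ _ ih
  | andR _ _ _ _ _ _ ih₁ ih₂ => exact .andR _ _ _ _ ih₁ ih₂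
  | boxR _ _ _ _ _ ih => exact .boxR _ _ _ _ ih
  | clo _ _ _ _ ih => exact .clo _ _ _ ih
  | nuR _ _ _ _ ih => exact .nuR _ _ _ ih
  | cut Γ A hA hc hl _ _ ih₁ ih₂ => exact .cut Γ A hA hc (by omega) ih₁ ih₂
  | omega c Γ A h h₁ hk hA hl _ ih =>
    exact .omega c Γ A h h₁ (by omega) hA hl fun Δ hΔ hpΔ hd =>
      ih Δ hΔ hpΔ (hmono.prevOf_of_succ h₁ hk hl hΔ hpΔ hd)
  | omegaT c Γ A h h₁ hk hA hl _ _ ih₁ ih =>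
    exact .omegaT c Γ A h h₁ (by omega) hA hl ih₁ fun Δ hΔ hpΔ hd =>
      ih Δ hΔ hpΔ (hmono.prevOf_of_succ h₁ hk hl hΔ hpΔ hd)

theorem monoBelow (m : ℕ) : MonoBelow m := by
  induction m with
  | zero => exact fun j hj => absurd hj (Nat.not_lt_zero j)
  | succ m ih =>
    intro j hj Θ d
    obtain hjm | rfl := Nat.lt_succ_iff_lt_or_eq.mp hj
    · exact ih j hjm Θ d
    · exact ih.mono_succ d

theorem OmProv.mono_succ {m : ℕ} {c : Bool} {Θ : Sequent} (d : OmProv m c Θ) :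
    OmProv (m + 1) c Θ :=
  (monoBelow m).mono_succ d

theorem OmProv.prime_compl_mu_mu {m : ℕ} {A : Form} (hA : A.IsL0) (hl : A.lev < m) :
    OmProv m false {(Form.compl (Form.mu A)).prime, (Form.mu A).prime} := by
  obtain ⟨m, rfl⟩ : ∃ m', m = m' + 1 := ⟨m - 1, by omega⟩
  rw [omProv_eq]
  refine .omega false _ A (A.lev + 1) (by omega) (by omega) hA (Form.lev_prime_compl_mu A) ?_
  intro Δ _ _ hd
  have hd' : OmProv (m + 1) false (insert (Form.mu A).prime Δ) := .mono_succ hd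
  rw [omProv_eq] at hd'
  exact hd'.weaken (by simp)

theorem OmProv.prime_subst_compl {m : ℕ} {A : Form} (hA : A.IsL0) (hl : A.lev ≤ m) {B D : Form}
    (hd : OmProv m false {B, D}) : OmProv m false {A.compl.prime.subst B, A.prime.subst D} := by
  induction A with
  | atom i | natom i =>
    rw [omProv_eq]
    exact .of_atom_mem (i := i) (by simp [Form.compl, Form.prime, Form.subst])
      (by simp [Form.compl, Form.prime, Form.subst])
  | var => exact hd
  | and A₁ A₂ ih₁ ih₂ =>
    simp only [Form.lev, max_le_iff] at hl
    have d₁ := ih₁ hA.1 hl.1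
    have d₂ := ih₂ hA.2 hl.2
    rw [omProv_eq] at d₁ d₂ ⊢
    exact .or_and d₁ d₂
  | or A₁ A₂ ih₁ ih₂ =>
    simp only [Form.lev, max_le_iff] at hl
    have d₁ := ih₁ hA.1 hl.1
    have d₂ := ih₂ hA.2 hl.2
    rw [omProv_eq, pair_comm] at d₁ d₂ ⊢
    exact .or_and d₁ d₂
  | box A ih =>
    have d := ih hA hl
    rw [omProv_eq] at d ⊢
    exact .dia_box d
  | dia A ih =>
    have d := ih hA hl
    rw [omProv_eq, pair_comm] at d ⊢
    exact .dia_box d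
  | mu A => exact .prime_compl_mu_mu hA hl
  | nu A =>
    replace hA : A.IsL0 := hA
    have d := OmProv.prime_compl_mu_mu hA.compl (m := m) (by rwa [Form.lev_compl])
    simp only [Form.compl, Form.prime, Form.compl_compl hA] at d
    rwa [pair_comm] at d
  | nut => simp [Form.IsL0] at hA

theorem OmProv.mu_prime_iter {m : ℕ} {A : Form} (hA : A.IsL0) (hl : A.lev ≤ m) (i : ℕ) :
    OmProv m false {(Form.mu A).prime, (A.compl.iter i).prime} := by
  induction i with
  | zero =>
    rw [omProv_eq]
    exact .of_top_mem (by simp [Form.iter, Form.top, Form.prime])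
  | succ i ih =>
    have d := OmProv.prime_subst_compl hA.compl (by rwa [Form.lev_compl]) ih
    rw [Form.compl_compl hA, omProv_eq] at d
    rw [omProv_eq, Form.iter, Form.prime_subst]
    exact .clo false _ _ d

namespace Form

inductive Unprimes : Form → Form → Prop
  | refl (F : Form) : Unprimes F F
  | prime {E : Form} : E.IsL0 → Unprimes E.prime E
  | and {F₁ F₂ E₁ E₂ : Form} :
      Unprimes F₁ E₁ → Unprimes F₂ E₂ → Unprimes (and F₁ F₂) (and E₁ E₂)
  | or {F₁ F₂ E₁ E₂ : Form} :
      Unprimes F₁ E₁ → Unprimes F₂ E₂ → Unprimes (or F₁ F₂) (or E₁ E₂)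
  | box {F E : Form} : Unprimes F E → Unprimes (box F) (box E)
  | dia {F E : Form} : Unprimes F E → Unprimes (dia F) (dia E)

variable {A B E : Form}

theorem Unprimes.atom_inv {i : ℕ} (h : Unprimes (Form.atom i) E) : E = Form.atom i := by
  generalize hF : Form.atom i = F at h
  cases h with
  | refl => rfl
  | prime => cases E <;> simp_all [Form.prime]
  | _ => cases hF

theorem Unprimes.natom_inv {i : ℕ} (h : Unprimes (Form.natom i) E) : E = Form.natom i := by
  generalize hF : Form.natom i = F at h
  cases h with
  | refl => rfl
  | prime => cases E <;> simp_all [Form.prime]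
  | _ => cases hF

theorem Unprimes.or_inv (h : Unprimes (Form.or A B) E) :
    ∃ E₁ E₂, E = Form.or E₁ E₂ ∧ Unprimes A E₁ ∧ Unprimes B E₂ := by
  generalize hF : Form.or A B = F at h
  cases h with
  | refl => exact ⟨A, B, hF.symm, .refl A, .refl B⟩
  | prime hE =>
    cases E <;> simp only [Form.prime, reduceCtorEq, Form.or.injEq] at hF
    obtain ⟨rfl, rfl⟩ := hF
    exact ⟨_, _, rfl, .prime hE.1, .prime hE.2⟩
  | or h₁ h₂ => cases hF; exact ⟨_, _, rfl, h₁, h₂⟩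
  | _ => cases hF

theorem Unprimes.and_inv (h : Unprimes (Form.and A B) E) :
    ∃ E₁ E₂, E = Form.and E₁ E₂ ∧ Unprimes A E₁ ∧ Unprimes B E₂ := by
  generalize hF : Form.and A B = F at h
  cases h with
  | refl => exact ⟨A, B, hF.symm, .refl A, .refl B⟩
  | prime hE =>
    cases E <;> simp only [Form.prime, reduceCtorEq, Form.and.injEq] at hF
    obtain ⟨rfl, rfl⟩ := hF
    exact ⟨_, _, rfl, .prime hE.1, .prime hE.2⟩
  | and h₁ h₂ => cases hF; exact ⟨_, _, rfl, h₁, h₂⟩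
  | _ => cases hF

theorem Unprimes.box_inv (h : Unprimes (Form.box A) E) :
    ∃ E₀, E = Form.box E₀ ∧ Unprimes A E₀ := by
  generalize hF : Form.box A = F at h
  cases h with
  | refl => exact ⟨A, hF.symm, .refl A⟩
  | prime hE =>
    cases E <;> simp only [Form.prime, reduceCtorEq, Form.box.injEq] at hF
    exact ⟨_, rfl, hF ▸ .prime hE⟩
  | box h => cases hF; exact ⟨_, rfl, h⟩
  | _ => cases hF

theorem Unprimes.dia_inv (h : Unprimes (Form.dia A) E) :
    ∃ E₀, E = Form.dia E₀ ∧ Unprimes A E₀ := by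
  generalize hF : Form.dia A = F at h
  cases h with
  | refl => exact ⟨A, hF.symm, .refl A⟩
  | prime hE =>
    cases E <;> simp only [Form.prime, reduceCtorEq, Form.dia.injEq] at hF
    exact ⟨_, rfl, hF ▸ .prime hE⟩
  | dia h => cases hF; exact ⟨_, rfl, h⟩
  | _ => cases hF

theorem Unprimes.mu_inv (h : Unprimes (Form.mu A) E) :
    ∃ E₀, E = Form.mu E₀ ∧ Unprimes (A.subst (Form.mu A)) (E₀.subst (Form.mu E₀)) := by
  generalize hF : Form.mu A = F at h
  cases h with
  | refl => subst hF; exact ⟨A, rfl, .refl _⟩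
  | prime hE =>
    cases E with
    | mu E₀ =>
      cases hF
      refine ⟨E₀, rfl, ?_⟩
      rw [← prime_subst]
      exact .prime (IsL0.subst (A := E₀) hE hE)
    | _ => simp [Form.prime] at hF
  | _ => cases hF

theorem Unprimes.nu_inv (h : Unprimes (Form.nu A) E) : E = Form.nu A := by
  generalize hF : Form.nu A = F at h
  cases h with
  | refl => rfl
  | prime => cases E <;> simp_all [Form.prime]
  | _ => cases hF

theorem Unprimes.nut_inv (h : Unprimes (Form.nut A) E) :
    E = Form.nut A ∨ ∃ E₀, E₀.IsL0 ∧ E = Form.nu E₀ ∧ A = E₀.prime := by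
  generalize hF : Form.nut A = F at h
  cases h with
  | refl => subst hF; exact .inl rfl
  | prime hE =>
    cases E with
    | nu E₀ => cases hF; exact .inr ⟨E₀, hE, rfl, rfl⟩
    | nut => simp [IsL0] at hE
    | _ => simp [Form.prime] at hF
  | _ => cases hF

theorem Unprimes.prime_subst {A : Form} (hA : A.IsL0) (B : Form) :
    Unprimes (A.prime.subst B) (A.subst B) := by
  induction A with
  | atom | natom => exact .refl _
  | var => exact .refl B
  | and _ _ ih₁ ih₂ => exact .and (ih₁ hA.1) (ih₂ hA.2)
  | or _ _ ih₁ ih₂ => exact .or (ih₁ hA.1) (ih₂ hA.2)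
  | box _ ih => exact .box (ih hA)
  | dia _ ih => exact .dia (ih hA)
  | mu A => exact .prime (E := mu A) hA
  | nu A => exact .prime (E := nu A) hA
  | nut => simp [IsL0] at hA

end Form

def SeqUnprimes (Θ Δ : Sequent) : Prop := ∀ F ∈ Θ, ∃ E ∈ Δ, F.Unprimes E

namespace SeqUnprimes

variable {Θ Δ Δ' : Sequent}

theorem of_subset (h : Θ ⊆ Δ) : SeqUnprimes Θ Δ := fun F hF => ⟨F, h hF, .refl F⟩

theorem mono (h : SeqUnprimes Θ Δ) (hΔ : Δ ⊆ Δ') : SeqUnprimes Θ Δ' := fun F hF =>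
  let ⟨E, hE, hFE⟩ := h F hF
  ⟨E, hΔ hE, hFE⟩

theorem insert_iff {F : Form} :
    SeqUnprimes (insert F Θ) Δ ↔ (∃ E ∈ Δ, F.Unprimes E) ∧ SeqUnprimes Θ Δ :=
  forall_mem_insert _ _ _

theorem insert {F E : Form} (hFE : F.Unprimes E) (h : SeqUnprimes Θ Δ) :
    SeqUnprimes (insert F Θ) (insert E Δ) :=
  insert_iff.mpr ⟨⟨E, mem_insert_self _ _, hFE⟩, h.mono (subset_insert _ _)⟩

theorem union_left (Δ₂ : Sequent) (h : SeqUnprimes Θ Δ) :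
    SeqUnprimes (Δ₂ ∪ Θ) (Δ₂ ∪ Δ) :=
  forall_mem_union.mpr ⟨of_subset subset_union_left, h.mono subset_union_right⟩

end SeqUnprimes

theorem OmProv.of_seqUnprimes {m : ℕ} {c : Bool} {Θ Δ : Sequent} (d : OmProv m c Θ)
    (h : SeqUnprimes Θ Δ) : OmProv m c Δ := by
  rw [omProv_eq] at d ⊢
  induction d generalizing Δ with
  | ax c Γ i =>
    obtain ⟨⟨E₁, hE₁, h₁⟩, ⟨E₂, hE₂, h₂⟩, -⟩ := by
      simpa only [SeqUnprimes.insert_iff] using h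
    rw [h₁.atom_inv] at hE₁
    rw [h₂.natom_inv] at hE₂
    exact .of_atom_mem hE₁ hE₂
  | orR c Γ A B _ ih =>
    obtain ⟨⟨E, hE, hu⟩, hΓ⟩ := SeqUnprimes.insert_iff.mp h
    obtain ⟨E₁, E₂, rfl, h₁, h₂⟩ := hu.or_inv
    rw [← insert_eq_of_mem hE]
    exact .orR c Δ E₁ E₂ (ih ((hΓ.insert h₂).insert h₁))
  | andR c Γ A B _ _ ih₁ ih₂ =>
    obtain ⟨⟨E, hE, hu⟩, hΓ⟩ := SeqUnprimes.insert_iff.mp h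
    obtain ⟨E₁, E₂, rfl, h₁, h₂⟩ := hu.and_inv
    rw [← insert_eq_of_mem hE]
    exact .andR c Δ E₁ E₂ (ih₁ (hΓ.insert h₁)) (ih₂ (hΓ.insert h₂))
  | boxR c Γ S A _ ih =>
    obtain ⟨hΓ, ⟨E, hE, hu⟩, -⟩ := by
      simpa only [SeqUnprimes, forall_mem_union, forall_mem_image, forall_mem_insert] using h
    obtain ⟨E₀, rfl, h₀⟩ := hu.box_inv
    have hinj : Set.InjOn Form.dia (Form.dia ⁻¹' Δ) := fun _ _ _ _ h => Form.dia.inj h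
    have hΓ' : SeqUnprimes Γ (Δ.preimage Form.dia hinj) := fun x hx =>
      let ⟨_, hE, hu⟩ := hΓ hx
      let ⟨E₁, hE₁, h₁⟩ := hu.dia_inv
      ⟨E₁, mem_preimage.mpr (hE₁ ▸ hE), h₁⟩
    have := OmDerAux.boxR c _ Δ E₀ (ih (hΓ'.insert h₀))
    rwa [insert_eq_of_mem hE,
      union_eq_right.mpr ((image_subset_iff_subset_preimage hinj).mpr subset_rfl)] at this
  | clo c Γ A _ ih =>
    obtain ⟨⟨E, hE, hu⟩, hΓ⟩ := SeqUnprimes.insert_iff.mp h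
    obtain ⟨E₀, rfl, h₀⟩ := hu.mu_inv
    rw [← insert_eq_of_mem hE]
    exact .clo c Δ E₀ (ih (hΓ.insert h₀))
  | nuR c Γ A _ ih =>
    obtain ⟨⟨E, hE, hu⟩, hΓ⟩ := SeqUnprimes.insert_iff.mp h
    rw [hu.nu_inv] at hE
    rw [← insert_eq_of_mem hE]
    exact .nuR c Δ A fun i => ih i (hΓ.insert (.refl _))
  | cut Γ A hA hc hl _ _ ih₁ ih₂ =>
    exact .cut Δ A hA hc hl (ih₁ (h.insert (.refl _))) (ih₂ (h.insert (.refl _)))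
  | omega c Γ A h' h₁ hk hA hl _ ih =>
    obtain ⟨⟨E, hE, hu⟩, hΓ⟩ := SeqUnprimes.insert_iff.mp h
    rw [← insert_eq_of_mem hE]
    obtain rfl | ⟨E₀, hE₀, rfl, hE₀'⟩ := Form.Unprimes.nut_inv (A := A.compl.prime) hu
    · exact .omega c Δ A h' h₁ hk hA hl
        fun Δ₂ hΔ₂ hp hd => ih Δ₂ hΔ₂ hp hd (hΓ.union_left Δ₂)
    -- The main formula unprimes to `νX.¬A`: the `Ω`-rule becomes an `ω`-rule.
    obtain rfl := Form.prime_injOn hE₀ hA.compl hE₀'.symm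
    obtain ⟨m, rfl⟩ : ∃ m', m = m' + 1 := ⟨m - 1, by omega⟩
    have hlA : A.lev + 1 = h' := by rw [← hl, Form.lev_prime_compl_mu]
    refine .nuR c Δ _ fun i => ?_
    have hlt : (A.compl.iter i).prime.lev < h' := by
      have := Form.lev_iter_le A.compl i
      rw [Form.lev_prime]; rw [Form.lev_compl] at this; omega
    refine ih _ (by simpa [ClosedSeq] using (Form.closedF_iter _ i).prime)
      (positive_singleton.mpr (.of_lev_lt hlt))
      (OmProv.mu_prime_iter hA (by omega) i) ?_
    rw [← insert_eq]
    exact hΓ.insert (.prime (hA.compl.iter i))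
  | omegaT c Γ A h' h₁ hk hA hl _ _ ih₁ ih =>
    exact .omegaT c Δ A h' h₁ hk hA hl (ih₁ (h.insert (.refl _)))
      fun Δ₂ hΔ₂ hp hd => ih Δ₂ hΔ₂ hp hd (h.union_left Δ₂)

theorem stmt5_general (h k : ℕ) (hhk : h ≤ k) (A B C : Form)
    (hA : A.IsL0) (hlev : A.lev = h)
    (hd : OmProv k false {B, C.prime}) :
    OmProv k false {Form.subst (Form.compl A) B, Form.subst A.prime C.prime} :=
  (OmProv.prime_subst_compl hA (hlev ▸ hhk) hd).of_seqUnprimes <|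
    SeqUnprimes.insert (.prime_subst hA.compl B) (.of_subset subset_rfl)

/-- for `h ≤ k`, if `A` is an operator form of `L0` with `lev(A) = h`,
`C` a formula of `L0`, and the two-formula sequent `B, Cʹ` is cut-free derivable in
`M^Ω_k`, then so is `(¬A)(B), Aʹ(Cʹ)`. -/
theorem stmt5 (h k : ℕ) (hhk : h ≤ k) (A B C : Form)
    (hA : A.IsL0) (hlev : A.lev = h)
    (hB : B.ClosedF) (hC : C.IsL0) (hCc : C.ClosedF)
    (hd : OmProv k false {B, C.prime}) :
    OmProv k false {Form.subst (Form.compl A) B, Form.subst A.prime C.prime} :=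
  stmt5_general h k hhk A B C hA hlev hd

end OneVarMu
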